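/- arXiv:2505.05277 — 2 statements merged into one kernel-verified Lean document; each statement's English description precedes it below -/
import Mathlib

section
/- Let d ≥ 2, let 0 < α ≤ 1, let Ω ⊆ ℝ^d be open and bounded, let g ∈ L^∞_α, and let u be a minimizer for λ₁^g(Ω), with Ω⁺ := {x : u(x) > 0}, Ω⁻ := {x : u(x) < 0}, u⁺ := max(u,0), u⁻ := max(−u,0) (both Ω⁺ and Ω⁻ have positive Lebesgue measure). Then: (i) there exist α₁, α₂ ∈ [α,1] such that λ₁^χ(Ω) ≤ λ₁^g(Ω), where χ : ℝ^d → ℝ equals α₁ on Ω⁺ and α₂ on ℝ^d \ Ω⁺; and (ii) if moreover R(u⁺) ≤ R(u⁻), then λ₁^{χ_α}(Ω) ≤ λ₁^g(Ω), where χ_α : ℝ^d → ℝ equals α on Ω⁺ and 1 on ℝ^d \ Ω⁺. -/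
open MeasureTheory Metric Set Filter

open scoped Classical ENNReal

noncomputable section

/-- The Rayleigh quotient of `u : ℝ^d → ℝ`. -/
def rayleigh (d : ℕ) (u : EuclideanSpace ℝ (Fin d) → ℝ) : ℝ :=
  (∫ x, ‖gradient u x‖ ^ 2) / (∫ x, (u x) ^ 2)

/-- A trial function for the Dirichlet eigenvalue on `Ω`: Lipschitz, vanishing outside `Ω`,
and not almost everywhere zero. -/
def IsDirTrial (d : ℕ) (Ω : Set (EuclideanSpace ℝ (Fin d)))
    (u : EuclideanSpace ℝ (Fin d) → ℝ) : Prop :=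
  (∃ K, LipschitzWith K u) ∧ (∀ x ∉ Ω, u x = 0) ∧ ¬ (u =ᵐ[volume] fun _ => (0 : ℝ))

/-- The first Dirichlet eigenvalue of `Ω`. -/
def dirichletEV (d : ℕ) (Ω : Set (EuclideanSpace ℝ (Fin d))) : ℝ :=
  sInf { r | ∃ u, IsDirTrial d Ω u ∧ rayleigh d u = r }

/-- The first twisted eigenvalue of `Ω` with orthogonality constraint `g`. -/
def twistedEV (d : ℕ) (Ω : Set (EuclideanSpace ℝ (Fin d)))
    (g : EuclideanSpace ℝ (Fin d) → ℝ) : ℝ :=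
  sInf { r | ∃ u, IsDirTrial d Ω u ∧ (∫ x, u x * g x) = 0 ∧ rayleigh d u = r }

/-- `u` is a minimizer for the first twisted eigenvalue `λ₁^g(Ω)`. -/
def IsTwistedMin (d : ℕ) (Ω : Set (EuclideanSpace ℝ (Fin d)))
    (g u : EuclideanSpace ℝ (Fin d) → ℝ) : Prop :=
  IsDirTrial d Ω u ∧ (∫ x, u x * g x) = 0 ∧ rayleigh d u = twistedEV d Ω g

/-- The bang-bang function equal to `1` on `Bm` and `α` elsewhere. -/
def chiBang (d : ℕ) (α : ℝ) (Bm : Set (EuclideanSpace ℝ (Fin d))) :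
    EuclideanSpace ℝ (Fin d) → ℝ :=
  fun x => if x ∈ Bm then 1 else α

/-!
Write `u = u⁺ - u⁻` and `P = ∫ u⁺`, `N = ∫ u⁻`. The constraint `∫ u g = 0` says
`A := ∫ u⁺ g = ∫ u⁻ g`, and `α ≤ g ≤ 1` gives `α P ≤ A ≤ P` and `α N ≤ A ≤ N`; in particular
`P` and `N` are both positive.

(i) For `α₁ = A / P` and `α₂ = A / N`, the minimizer `u` itself is orthogonal to the bang-bang
weight, so that twisted eigenvalue is at most `R(u) = λ₁^g(Ω)`.

(ii) For `t = α P / N ∈ [0, 1]`, the function `v = u⁺ - t u⁻` is orthogonal to `χ_α`. At every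
point one of `u⁺`, `u⁻` vanishes, hence attains its minimum, so its derivative vanishes there;
therefore `R(v) = (a + t² b) / (c + t² e)` where `R(u⁺) = a / c ≤ b / e = R(u⁻)`. This mediant
increases with `t²`, so `R(v) ≤ R(u)`.
-/

open scoped NNReal

theorem LipschitzWith.posPart {X : Type*} [PseudoEMetricSpace X] {K : ℝ≥0} {u : X → ℝ}
    (hu : LipschitzWith K u) : LipschitzWith K u⁺ :=
  (lipschitzWith_posPart.comp hu).weaken (one_mul K).le

theorem LipschitzWith.negPart {X : Type*} [PseudoEMetricSpace X] {K : ℝ≥0} {u : X → ℝ}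
    (hu : LipschitzWith K u) : LipschitzWith K u⁻ :=
  (lipschitzWith_negPart.comp hu).weaken (one_mul K).le

theorem HasCompactSupport.posPart {X : Type*} [TopologicalSpace X] {u : X → ℝ}
    (hu : HasCompactSupport u) : HasCompactSupport u⁺ :=
  hu.comp_left posPart_zero

theorem HasCompactSupport.negPart {X : Type*} [TopologicalSpace X] {u : X → ℝ}
    (hu : HasCompactSupport u) : HasCompactSupport u⁻ :=
  hu.comp_left negPart_zero

theorem fderiv_eq_zero_of_nonneg_of_eq_zero {F : Type*} [NormedAddCommGroup F] [NormedSpace ℝ F]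
    {f : F → ℝ} {x : F} (hf : 0 ≤ f) (hx : f x = 0) : fderiv ℝ f x = 0 :=
  IsLocalMin.fderiv_eq_zero <| Eventually.of_forall fun y => hx ▸ hf y

section Gradient

variable {E : Type*} [NormedAddCommGroup E] [InnerProductSpace ℝ E] [CompleteSpace E]

theorem norm_gradient (f : E → ℝ) (x : E) : ‖gradient f x‖ = ‖fderiv ℝ f x‖ :=
  (InnerProductSpace.toDual ℝ E).symm.norm_map _

theorem sq_norm_gradient_sub_smul {f g : E → ℝ} {x : E} (hf : 0 ≤ f) (hg : 0 ≤ g)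
    (hfg : f x = 0 ∨ g x = 0) (hfx : DifferentiableAt ℝ f x) (hgx : DifferentiableAt ℝ g x)
    (t : ℝ) :
    ‖gradient (f - t • g) x‖ ^ 2 = ‖gradient f x‖ ^ 2 + t ^ 2 * ‖gradient g x‖ ^ 2 := by
  simp only [norm_gradient]
  rw [fderiv_sub hfx (hgx.const_smul t), fderiv_const_smul hgx]
  rcases hfg with hfx0 | hgx0
  · simp [fderiv_eq_zero_of_nonneg_of_eq_zero hf hfx0, norm_smul, mul_pow]
  · simp [fderiv_eq_zero_of_nonneg_of_eq_zero hg hgx0]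

theorem LipschitzWith.ae_sq_norm_gradient_posPart_sub_smul_negPart [FiniteDimensional ℝ E]
    [MeasurableSpace E] [BorelSpace E] {μ : Measure E} [μ.IsAddHaarMeasure] {K : ℝ≥0}
    {u : E → ℝ} (hu : LipschitzWith K u) (t : ℝ) :
    ∀ᵐ x ∂μ, ‖gradient (u⁺ - t • u⁻) x‖ ^ 2
      = ‖gradient u⁺ x‖ ^ 2 + t ^ 2 * ‖gradient u⁻ x‖ ^ 2 := by
  filter_upwards [hu.posPart.ae_differentiableAt, hu.negPart.ae_differentiableAt] with x hpx hnx
  exact sq_norm_gradient_sub_smul (fun y => posPart_nonneg (u y)) (fun y => negPart_nonneg (u y))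
    ((le_total (u x) 0).imp posPart_eq_zero.2 negPart_eq_zero.2) hpx hnx t

theorem LipschitzWith.integrable_sq_norm_gradient [MeasurableSpace E] [OpensMeasurableSpace E]
    {μ : Measure E} [IsFiniteMeasureOnCompacts μ] {K : ℝ≥0} {f : E → ℝ}
    (hf : LipschitzWith K f) (hcs : HasCompactSupport f) :
    Integrable (fun x => ‖gradient f x‖ ^ 2) μ := by
  have hmeas : AEStronglyMeasurable (fun x => ‖gradient f x‖ ^ 2) μ := by
    simp only [norm_gradient]
    exact ((measurable_fderiv ℝ f).norm.pow_const 2).aestronglyMeasurable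
  refine (Measure.integrableOn_of_bounded (M := K ^ 2) hcs.measure_lt_top.ne hmeas
    (Eventually.of_forall fun x => ?_)).integrable_of_forall_notMem_eq_zero fun x hx => ?_
  · rw [norm_pow, norm_norm, norm_gradient]
    exact pow_le_pow_left₀ (norm_nonneg _) (norm_fderiv_le_of_lipschitz ℝ hf) 2
  · rw [norm_gradient, Function.notMem_support.1 fun h => hx (support_fderiv_subset ℝ h)]
    simp

end Gradient

section Integrals

variable {X : Type*} [MeasurableSpace X] {μ : Measure X}

theorem MeasureTheory.Integrable.mul_of_ae_mem_Icc {f g : X → ℝ} {a b : ℝ}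
    (hf : Integrable f μ) (hgm : AEStronglyMeasurable g μ) (hg : ∀ᵐ x ∂μ, g x ∈ Icc a b) :
    Integrable (fun x => f x * g x) μ :=
  hf.mul_bdd hgm (hg.mono fun _ hx => abs_le_max_abs_abs hx.1 hx.2)

theorem integral_mul_mem_Icc {f g : X → ℝ} {a b : ℝ} (hf0 : 0 ≤ f) (hf : Integrable f μ)
    (hgm : AEStronglyMeasurable g μ) (hg : ∀ᵐ x ∂μ, g x ∈ Icc a b) :
    ∫ x, f x * g x ∂μ ∈ Icc (a * ∫ x, f x ∂μ) (b * ∫ x, f x ∂μ) := by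
  have hfg := hf.mul_of_ae_mem_Icc hgm hg
  rw [← integral_const_mul, ← integral_const_mul]
  refine ⟨integral_mono_ae (hf.const_mul a) hfg (hg.mono fun x hx => ?_),
    integral_mono_ae hfg (hf.const_mul b) (hg.mono fun x hx => ?_)⟩
  · dsimp only
    rw [mul_comm]
    exact mul_le_mul_of_nonneg_left hx.1 (hf0 x)
  · dsimp only
    rw [mul_comm b]
    exact mul_le_mul_of_nonneg_left hx.2 (hf0 x)

theorem integral_posPart_mul_sub_integral_negPart_mul {u g : X → ℝ} {a b : ℝ}
    (hu : Integrable u μ) (hgm : AEStronglyMeasurable g μ) (hg : ∀ᵐ x ∂μ, g x ∈ Icc a b) :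
    ∫ x, u⁺ x * g x ∂μ - ∫ x, u⁻ x * g x ∂μ = ∫ x, u x * g x ∂μ := by
  have hp : Integrable u⁺ μ := hu.pos_part
  have hn : Integrable u⁻ μ := hu.neg_part
  rw [← integral_sub (hp.mul_of_ae_mem_Icc hgm hg) (hn.mul_of_ae_mem_Icc hgm hg)]
  congr 1 with x
  rw [← sub_mul, ← Pi.sub_apply, posPart_sub_negPart]

theorem integral_abs_pos {f : X → ℝ} (hf : Integrable f μ) (h : ¬ f =ᵐ[μ] 0) :
    0 < ∫ x, |f x| ∂μ :=
  (integral_nonneg fun x => abs_nonneg (f x)).lt_of_ne' fun h0 => h <|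
    ((integral_eq_zero_iff_of_nonneg (fun x => abs_nonneg (f x)) hf.abs).1 h0).mono
      fun _ hx => abs_eq_zero.1 hx

theorem integral_posPart_pos_and_integral_negPart_pos {u : X → ℝ} {α : ℝ}
    (hu : Integrable u μ) (hu0 : ¬ u =ᵐ[μ] 0) (hα : 0 < α) (hP : α * ∫ x, u⁺ x ∂μ ≤ ∫ x, u⁻ x ∂μ)
    (hN : α * ∫ x, u⁻ x ∂μ ≤ ∫ x, u⁺ x ∂μ) : 0 < ∫ x, u⁺ x ∂μ ∧ 0 < ∫ x, u⁻ x ∂μ := by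
  have hp : Integrable u⁺ μ := hu.pos_part
  have hn : Integrable u⁻ μ := hu.neg_part
  have hPN : 0 < (∫ x, u⁺ x ∂μ) + ∫ x, u⁻ x ∂μ := by
    rw [← integral_add hp hn]
    refine (integral_abs_pos hu hu0).trans_eq (integral_congr_ae (ae_of_all _ fun x => ?_))
    exact (posPart_add_negPart (u x)).symm
  constructor <;> nlinarith

theorem integral_sq_pos_of_integral_pos {f : X → ℝ} (hf2 : Integrable (fun x => f x ^ 2) μ)
    (hf : 0 < ∫ x, f x ∂μ) : 0 < ∫ x, f x ^ 2 ∂μ := by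
  refine (integral_nonneg fun x => sq_nonneg (f x)).lt_of_ne' fun h0 => hf.ne' ?_
  have hsq : (fun x => f x ^ 2) =ᵐ[μ] 0 :=
    (integral_eq_zero_iff_of_nonneg (fun x => sq_nonneg (f x)) hf2).1 h0
  exact integral_eq_zero_of_ae (hsq.mono fun _ hx => pow_eq_zero_iff two_ne_zero |>.1 hx)

theorem integral_posPart_sub_smul_negPart_mul_ite {u : X → ℝ} (hu : Integrable u μ)
    (t a b : ℝ) :
    ∫ x, (u⁺ - t • u⁻) x * (if 0 < u x then a else b) ∂μ
      = a * ∫ x, u⁺ x ∂μ - b * t * ∫ x, u⁻ x ∂μ := by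
  have hpt : ∀ x,
      (u⁺ - t • u⁻) x * (if 0 < u x then a else b) = a * u⁺ x - b * t * u⁻ x := by
    intro x
    by_cases hx : 0 < u x
    · simp [hx, negPart_eq_zero.2 hx.le, mul_comm]
    · simp [hx, posPart_eq_zero.2 (not_lt.1 hx)]
      ring
  have hp : Integrable u⁺ μ := hu.pos_part
  have hn : Integrable u⁻ μ := hu.neg_part
  simp only [hpt]
  rw [integral_sub (hp.const_mul a) (hn.const_mul (b * t)), integral_const_mul,
    integral_const_mul]

variable [TopologicalSpace X] [OpensMeasurableSpace X] [IsFiniteMeasureOnCompacts μ]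

theorem Continuous.integrable_sq_of_hasCompactSupport {f : X → ℝ} (hf : Continuous f)
    (hcs : HasCompactSupport f) : Integrable (fun x => f x ^ 2) μ := by
  have hcs2 : HasCompactSupport (fun x => f x ^ 2) :=
    hcs.comp_left (g := fun s : ℝ => s ^ 2) (zero_pow two_ne_zero)
  exact (hf.pow 2).integrable_of_hasCompactSupport hcs2

theorem integral_sq_posPart_sub_smul_negPart {u : X → ℝ} (hu : Continuous u)
    (hcs : HasCompactSupport u) (t : ℝ) :
    ∫ x, (u⁺ - t • u⁻) x ^ 2 ∂μ = (∫ x, u⁺ x ^ 2 ∂μ) + t ^ 2 * ∫ x, u⁻ x ^ 2 ∂μ := by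
  have hpt : ∀ x, (u⁺ - t • u⁻) x ^ 2 = u⁺ x ^ 2 + t ^ 2 * u⁻ x ^ 2 := by
    intro x
    rcases le_total (u x) 0 with hx | hx
    · simp [posPart_eq_zero.2 hx, mul_pow]
    · simp [negPart_eq_zero.2 hx]
  have hp : Integrable (fun x => u⁺ x ^ 2) μ :=
    (continuous_posPart.comp hu).integrable_sq_of_hasCompactSupport hcs.posPart
  have hn : Integrable (fun x => u⁻ x ^ 2) μ :=
    (continuous_negPart.comp hu).integrable_sq_of_hasCompactSupport hcs.negPart
  simp only [hpt]
  rw [integral_add hp (hn.const_mul _), integral_const_mul]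

end Integrals

theorem add_mul_div_add_mul_le_add_div_add {a b c e s : ℝ} (hc : 0 < c) (he : 0 ≤ e)
    (hs0 : 0 ≤ s) (hs1 : s ≤ 1) (h : a * e ≤ b * c) :
    (a + s * b) / (c + s * e) ≤ (a + b) / (c + e) := by
  rw [div_le_div_iff₀ (by positivity) (by positivity)]
  nlinarith [mul_nonneg (sub_nonneg.2 hs1) (sub_nonneg.2 h)]

section TwistedEigenvalue

variable {d : ℕ}

theorem rayleigh_nonneg (u : EuclideanSpace ℝ (Fin d) → ℝ) : 0 ≤ rayleigh d u :=
  div_nonneg (integral_nonneg fun _ => sq_nonneg _) (integral_nonneg fun _ => sq_nonneg _)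

theorem twistedEV_le_rayleigh {Ω : Set (EuclideanSpace ℝ (Fin d))}
    {g v : EuclideanSpace ℝ (Fin d) → ℝ} (hv : IsDirTrial d Ω v) (hvg : ∫ x, v x * g x = 0) :
    twistedEV d Ω g ≤ rayleigh d v :=
  csInf_le ⟨0, by rintro r ⟨w, -, -, rfl⟩; exact rayleigh_nonneg w⟩ ⟨v, hv, hvg, rfl⟩

theorem rayleigh_posPart_sub_smul_negPart {u : EuclideanSpace ℝ (Fin d) → ℝ} {K : ℝ≥0}
    (hu : LipschitzWith K u) (hcs : HasCompactSupport u) (t : ℝ) :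
    rayleigh d (u⁺ - t • u⁻)
      = ((∫ x, ‖gradient u⁺ x‖ ^ 2) + t ^ 2 * ∫ x, ‖gradient u⁻ x‖ ^ 2)
        / ((∫ x, u⁺ x ^ 2) + t ^ 2 * ∫ x, u⁻ x ^ 2) := by
  rw [rayleigh, integral_congr_ae (hu.ae_sq_norm_gradient_posPart_sub_smul_negPart t),
    integral_add (hu.posPart.integrable_sq_norm_gradient hcs.posPart)
      ((hu.negPart.integrable_sq_norm_gradient hcs.negPart).const_mul _),
    integral_const_mul, integral_sq_posPart_sub_smul_negPart hu.continuous hcs]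

theorem twistedEV_ite_le_rayleigh_posPart_sub_smul_negPart
    {Ω : Set (EuclideanSpace ℝ (Fin d))} {u : EuclideanSpace ℝ (Fin d) → ℝ} {K : ℝ≥0}
    (hu : LipschitzWith K u)
    (hΩu : ∀ x ∉ Ω, u x = 0) (hcs : HasCompactSupport u) (hP : 0 < ∫ x, u⁺ x)
    {t a b : ℝ} (hab : a * ∫ x, u⁺ x = b * t * ∫ x, u⁻ x) :
    twistedEV d Ω (fun x => if 0 < u x then a else b) ≤ rayleigh d (u⁺ - t • u⁻) := by
  have hv : LipschitzWith (K + ‖t‖₊ * K) (u⁺ - t • u⁻) :=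
    hu.posPart.sub ((lipschitzWith_smul t).comp hu.negPart)
  refine twistedEV_le_rayleigh ⟨⟨_, hv⟩, fun x hx => by simp [hΩu x hx], fun hv0 => ?_⟩ ?_
  · have hv2 : ∫ x, (u⁺ - t • u⁻) x ^ 2 = 0 :=
      integral_eq_zero_of_ae (hv0.mono fun x hx => by simp [hx])
    rw [integral_sq_posPart_sub_smul_negPart hu.continuous hcs] at hv2
    have hc : 0 < ∫ x, u⁺ x ^ 2 := integral_sq_pos_of_integral_pos
      (hu.posPart.continuous.integrable_sq_of_hasCompactSupport hcs.posPart) hP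
    have he : 0 ≤ ∫ x, u⁻ x ^ 2 := integral_nonneg fun x => sq_nonneg (u⁻ x)
    nlinarith [sq_nonneg t]
  · rw [integral_posPart_sub_smul_negPart_mul_ite
      (hu.continuous.integrable_of_hasCompactSupport hcs), hab, sub_self]

theorem rayleigh_posPart_sub_smul_negPart_le {u : EuclideanSpace ℝ (Fin d) → ℝ} {K : ℝ≥0}
    (hu : LipschitzWith K u) (hcs : HasCompactSupport u) (hP : 0 < ∫ x, u⁺ x)
    (hN : 0 < ∫ x, u⁻ x) (hray : rayleigh d u⁺ ≤ rayleigh d u⁻) {t : ℝ} (ht : t ^ 2 ≤ 1) :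
    rayleigh d (u⁺ - t • u⁻) ≤ rayleigh d u := by
  have hc : 0 < ∫ x, u⁺ x ^ 2 := integral_sq_pos_of_integral_pos
    (hu.posPart.continuous.integrable_sq_of_hasCompactSupport hcs.posPart) hP
  have he : 0 < ∫ x, u⁻ x ^ 2 := integral_sq_pos_of_integral_pos
    (hu.negPart.continuous.integrable_sq_of_hasCompactSupport hcs.negPart) hN
  have hu1 := rayleigh_posPart_sub_smul_negPart hu hcs 1
  rw [one_smul, posPart_sub_negPart, one_pow, one_mul, one_mul] at hu1
  rw [hu1, rayleigh_posPart_sub_smul_negPart hu hcs t]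
  exact add_mul_div_add_mul_le_add_div_add hc he.le (sq_nonneg t) ht
    ((div_le_div_iff₀ hc he).1 hray)

end TwistedEigenvalue

theorem stmt9_general (d : ℕ) (α : ℝ) (hα0 : 0 < α)
    (Ω : Set (EuclideanSpace ℝ (Fin d))) (hΩb : Bornology.IsBounded Ω)
    (g : EuclideanSpace ℝ (Fin d) → ℝ) (hgm : Measurable g)
    (hg : ∀ᵐ x, α ≤ g x ∧ g x ≤ 1)
    (u : EuclideanSpace ℝ (Fin d) → ℝ) (hu : IsTwistedMin d Ω g u) :
    (∃ α₁ α₂ : ℝ, α ≤ α₁ ∧ α₁ ≤ 1 ∧ α ≤ α₂ ∧ α₂ ≤ 1 ∧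
      twistedEV d Ω (fun x => if 0 < u x then α₁ else α₂) ≤ twistedEV d Ω g) ∧
    (rayleigh d (fun x => max (u x) 0) ≤ rayleigh d (fun x => max (-u x) 0) →
      twistedEV d Ω (fun x => if 0 < u x then α else 1) ≤ twistedEV d Ω g) := by
  obtain ⟨⟨⟨K, hK⟩, hΩu, hu0⟩, hug, hmin⟩ := hu
  have hcs : HasCompactSupport u :=
    HasCompactSupport.intro hΩb.isCompact_closure fun x hx => hΩu x fun h => hx (subset_closure h)
  have hui : Integrable u := hK.continuous.integrable_of_hasCompactSupport hcs
  have hA : ∫ x, u⁻ x * g x = ∫ x, u⁺ x * g x := by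
    linarith [integral_posPart_mul_sub_integral_negPart_mul hui hgm.aestronglyMeasurable hg]
  obtain ⟨hαP, hAP⟩ := integral_mul_mem_Icc (f := u⁺) (fun x => posPart_nonneg (u x))
    hui.pos_part hgm.aestronglyMeasurable hg
  obtain ⟨hαN, hAN⟩ := hA ▸ integral_mul_mem_Icc (f := u⁻) (fun x => negPart_nonneg (u x))
    hui.neg_part hgm.aestronglyMeasurable hg
  rw [one_mul] at hAP hAN
  obtain ⟨hP, hN⟩ := integral_posPart_pos_and_integral_negPart_pos hui hu0 hα0
    (hαP.trans hAN) (hαN.trans hAP)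
  refine ⟨⟨_, _, (le_div_iff₀ hP).2 hαP, (div_le_one hP).2 hAP, (le_div_iff₀ hN).2 hαN,
    (div_le_one hN).2 hAN, ?_⟩, fun hray => ?_⟩
  · calc _ ≤ rayleigh d (u⁺ - (1 : ℝ) • u⁻) :=
          twistedEV_ite_le_rayleigh_posPart_sub_smul_negPart hK hΩu hcs hP (by field_simp)
      _ = twistedEV d Ω g := by rw [one_smul, posPart_sub_negPart, ← hmin]
  · have ht : (α * (∫ x, u⁺ x) / ∫ x, u⁻ x) ^ 2 ≤ 1 :=
      pow_le_one₀ (by positivity) ((div_le_one hN).2 (hαP.trans hAN))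
    calc _ ≤ rayleigh d (u⁺ - (α * (∫ x, u⁺ x) / ∫ x, u⁻ x) • u⁻) :=
          twistedEV_ite_le_rayleigh_posPart_sub_smul_negPart hK hΩu hcs hP (by field_simp)
      _ ≤ rayleigh d u := rayleigh_posPart_sub_smul_negPart_le hK hcs hP hN hray ht
      _ = twistedEV d Ω g := hmin

/-- comparison of `λ₁^g(Ω)` with twisted eigenvalues for bang-bang constraints
built on the nodal sets of a minimizer. -/
theorem stmt9 (d : ℕ) (hd : 2 ≤ d) (α : ℝ) (hα0 : 0 < α) (hα1 : α ≤ 1)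
    (Ω : Set (EuclideanSpace ℝ (Fin d))) (hΩo : IsOpen Ω) (hΩb : Bornology.IsBounded Ω)
    (g : EuclideanSpace ℝ (Fin d) → ℝ) (hgm : Measurable g)
    (hg : ∀ᵐ x, α ≤ g x ∧ g x ≤ 1)
    (u : EuclideanSpace ℝ (Fin d) → ℝ) (hu : IsTwistedMin d Ω g u) :
    (∃ α₁ α₂ : ℝ, α ≤ α₁ ∧ α₁ ≤ 1 ∧ α ≤ α₂ ∧ α₂ ≤ 1 ∧
      twistedEV d Ω (fun x => if 0 < u x then α₁ else α₂) ≤ twistedEV d Ω g) ∧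
    (rayleigh d (fun x => max (u x) 0) ≤ rayleigh d (fun x => max (-u x) 0) →
      twistedEV d Ω (fun x => if 0 < u x then α else 1) ≤ twistedEV d Ω g) :=
  stmt9_general d α hα0 Ω hΩb g hgm hg u hu
end
end

section
/- Let σ ≥ 1/2 and define Υ_σ(x) := x · ( J_{σ+1}(x)/J_σ(x) + J_σ(x)/J_{σ+1}(x) ) for x ∈ (0, j_{σ,1}). Then Υ_σ is strictly increasing on (0, j_{σ,1}), and moreover Υ_σ(x) = 2(σ+1) + x · ( J_{σ+1}(x)/J_σ(x) − J_{σ+2}(x)/J_{σ+1}(x) ) for every x ∈ (0, j_{σ,1}). -/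
/-!
Write `P = J_σ`, `Q = J_{σ+1}`. The derivative formulas `P' = σP/x - Q` and
`Q' = P - (σ+1)Q/x` give `Υ' = N / (PQ)²` with
`N = 2(σ+1)P³Q - 2σPQ³ - xP⁴ + xQ⁴`. Positivity of `P` comes from the intermediate value
theorem, and positivity of `Q`, of `Z = x(P² + Q²) - 2(σ+1)PQ` and of `N` on `(0, j_{σ,1})`
all follow from one principle: a function with positive derivative on `(0, b)` that tends
to `0` at `0⁺` is positive there. It is applied to `x^{σ+1} Q` (derivative `x^{σ+1} P`),
to `x Z` (derivative `2xQ²`) and to `x N / Q²` (derivative `2PZ(Z + PQ)/Q³`).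
The behaviour at `0` comes from `J_σ(x) = (x/2)^σ G_σ(x²/4)`, where `G_σ = besselSeries σ`
is entire with `G_σ' = -G_{σ+1}`; the formula for `Υ` is the recurrence
`J_σ + J_{σ+2} = 2(σ+1) J_{σ+1} / x`.
-/

open Set

noncomputable section

/-- The Bessel function of the first kind of order `σ`, defined by its power series
(for positive arguments, using real powers). -/
def besselJ (σ : ℝ) (x : ℝ) : ℝ :=
  ∑' m : ℕ, ((-1 : ℝ) ^ m / ((m.factorial : ℝ) * Real.Gamma ((m : ℝ) + σ + 1))) *
    (x / 2) ^ (2 * (m : ℝ) + σ)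

/-- The first positive zero `j_{σ,1}` of the Bessel function `J_σ`. -/
def besselJZero (σ : ℝ) : ℝ :=
  sInf {x : ℝ | 0 < x ∧ besselJ σ x = 0}

open Filter Topology
open scoped Nat

section Calculus

variable {f f' : ℝ → ℝ} {a b : ℝ}

lemma strictMonoOn_Ioo_of_hasDerivAt_pos (hf : ∀ t ∈ Ioo a b, HasDerivAt f (f' t) t)
    (hf' : ∀ t ∈ Ioo a b, 0 < f' t) : StrictMonoOn f (Ioo a b) :=
  strictMonoOn_of_hasDerivWithinAt_pos (convex_Ioo a b)
    (fun t ht => (hf t ht).continuousAt.continuousWithinAt)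
    (by simpa only [interior_Ioo] using fun t ht => (hf t ht).hasDerivWithinAt)
    (by simpa only [interior_Ioo] using hf')

lemma pos_of_hasDerivAt_pos_of_tendsto_nhdsGT (hf : ∀ t ∈ Ioo a b, HasDerivAt f (f' t) t)
    (hf' : ∀ t ∈ Ioo a b, 0 < f' t) (hlim : Tendsto f (𝓝[>] a) (𝓝 0)) {x : ℝ}
    (hx : x ∈ Ioo a b) : 0 < f x := by
  have hmono := strictMonoOn_Ioo_of_hasDerivAt_pos hf hf'
  have hm : (a + x) / 2 ∈ Ioo a b := ⟨by linarith [hx.1], by linarith [hx.1, hx.2]⟩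
  have hfm : 0 ≤ f ((a + x) / 2) := by
    refine le_of_tendsto hlim ?_
    filter_upwards [Ioo_mem_nhdsGT hm.1] with t ht
    exact (hmono ⟨ht.1, ht.2.trans hm.2⟩ hm ht.2).le
  exact hfm.trans_lt (hmono hm hx (by linarith [hx.1]))

end Calculus

def besselCoeff (σ : ℝ) (m : ℕ) : ℝ :=
  (-1 : ℝ) ^ m / ((m ! : ℝ) * Real.Gamma ((m : ℝ) + σ + 1))

def besselSeries (σ y : ℝ) : ℝ :=
  ∑' m : ℕ, besselCoeff σ m * y ^ m

section Coefficients

variable {σ : ℝ}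

lemma factorial_mul_Gamma_le_Gamma_natCast_add (hσ : 0 ≤ σ) (m : ℕ) :
    (m ! : ℝ) * Real.Gamma (σ + 1) ≤ Real.Gamma ((m : ℝ) + σ + 1) := by
  induction m with
  | zero => simp
  | succ n ih =>
    rw [Nat.factorial_succ, Nat.cast_mul, Nat.cast_succ,
      show (n : ℝ) + 1 + σ + 1 = ((n : ℝ) + σ + 1) + 1 by ring,
      Real.Gamma_add_one (s := (n : ℝ) + σ + 1) (by positivity), mul_assoc]
    exact mul_le_mul (by linarith) ih (by positivity) (by positivity)

lemma abs_besselCoeff_le (hσ : 0 ≤ σ) (m : ℕ) :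
    |besselCoeff σ m| ≤ (Real.Gamma (σ + 1))⁻¹ / m ! := by
  have hΓ : 0 < Real.Gamma (σ + 1) := Real.Gamma_pos_of_pos (by linarith)
  rw [besselCoeff, abs_div, abs_pow, abs_neg, abs_one, one_pow, inv_div_left, ← one_div,
    abs_of_pos (by positivity)]
  gcongr
  calc Real.Gamma (σ + 1) ≤ m ! * Real.Gamma (σ + 1) :=
        le_mul_of_one_le_left hΓ.le (mod_cast m.factorial_pos)
    _ ≤ Real.Gamma ((m : ℝ) + σ + 1) := factorial_mul_Gamma_le_Gamma_natCast_add hσ m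

lemma besselCoeff_zero (σ : ℝ) : besselCoeff σ 0 = (Real.Gamma (σ + 1))⁻¹ := by
  simp [besselCoeff]

lemma besselCoeff_succ_mul (σ : ℝ) (m : ℕ) :
    besselCoeff σ (m + 1) * (m + 1) = -besselCoeff (σ + 1) m := by
  rw [besselCoeff, besselCoeff, Nat.factorial_succ, pow_succ,
    show ((m + 1 : ℕ) : ℝ) + σ + 1 = (m : ℝ) + (σ + 1) + 1 by push_cast; ring]
  push_cast
  field_simp

lemma besselCoeff_recurrence (hσ : 0 ≤ σ) (m : ℕ) :
    (σ + 1) * besselCoeff (σ + 1) (m + 1) - besselCoeff σ (m + 1) = besselCoeff (σ + 2) m := by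
  have hΓ : 0 < Real.Gamma ((m : ℝ) + σ + 2) := Real.Gamma_pos_of_pos (by positivity)
  rw [besselCoeff, besselCoeff, besselCoeff, Nat.factorial_succ, pow_succ,
    show ((m + 1 : ℕ) : ℝ) + (σ + 1) + 1 = ((m : ℝ) + σ + 2) + 1 by push_cast; ring,
    show ((m + 1 : ℕ) : ℝ) + σ + 1 = (m : ℝ) + σ + 2 by push_cast; ring,
    show (m : ℝ) + (σ + 2) + 1 = ((m : ℝ) + σ + 2) + 1 by ring,
    Real.Gamma_add_one (by positivity)]
  push_cast
  field_simp
  ring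

end Coefficients

section Series

variable {σ : ℝ}

lemma summable_besselCoeff_mul_pow (hσ : 0 ≤ σ) (y : ℝ) :
    Summable (fun m => besselCoeff σ m * y ^ m) := by
  refine Summable.of_norm_bounded
    ((Real.summable_pow_div_factorial |y|).mul_left (Real.Gamma (σ + 1))⁻¹) fun m => ?_
  rw [norm_mul, norm_pow, Real.norm_eq_abs, Real.norm_eq_abs]
  calc |besselCoeff σ m| * |y| ^ m ≤ (Real.Gamma (σ + 1))⁻¹ / m ! * |y| ^ m := by
        gcongr; exact abs_besselCoeff_le hσ m
    _ = (Real.Gamma (σ + 1))⁻¹ * (|y| ^ m / m !) := by ring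

lemma norm_besselCoeff_mul_deriv_pow_le (hσ : 0 ≤ σ) {R : ℝ} (hR : 1 ≤ R) (m : ℕ) {z : ℝ}
    (hz : |z| < R) :
    ‖besselCoeff σ m * (m * z ^ (m - 1))‖ ≤ (Real.Gamma (σ + 1))⁻¹ * ((2 * R) ^ m / m !) := by
  have hpow : (m : ℝ) * |z| ^ (m - 1) ≤ (2 * R) ^ m := by
    rw [mul_pow]
    gcongr
    · exact_mod_cast m.lt_two_pow_self.le
    · calc |z| ^ (m - 1) ≤ R ^ (m - 1) := by gcongr
        _ ≤ R ^ m := pow_le_pow_right₀ hR (m.sub_le 1)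
  rw [norm_mul, norm_mul, norm_pow, Real.norm_eq_abs, Real.norm_eq_abs, Real.norm_eq_abs,
    Nat.abs_cast]
  calc |besselCoeff σ m| * (m * |z| ^ (m - 1)) ≤ (Real.Gamma (σ + 1))⁻¹ / m ! * (2 * R) ^ m :=
        mul_le_mul (abs_besselCoeff_le hσ m) hpow (by positivity) (by positivity)
    _ = (Real.Gamma (σ + 1))⁻¹ * ((2 * R) ^ m / m !) := by ring

lemma hasDerivAt_besselSeries (hσ : 0 ≤ σ) (y : ℝ) :
    HasDerivAt (besselSeries σ) (-besselSeries (σ + 1) y) y := by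
  set R := |y| + 1
  have hR : 1 ≤ R := by simp [R]
  have hbound := (Real.summable_pow_div_factorial (2 * R)).mul_left (Real.Gamma (σ + 1))⁻¹
  have hy : y ∈ Metric.ball (0 : ℝ) R := by simp [R]
  have hderiv : HasDerivAt (besselSeries σ) (∑' m : ℕ, besselCoeff σ m * (m * y ^ (m - 1))) y :=
    hasDerivAt_tsum_of_isPreconnected hbound Metric.isOpen_ball (convex_ball 0 R).isPreconnected
      (fun m z _ => (hasDerivAt_pow m z).const_mul (besselCoeff σ m))
      (fun m z hz => norm_besselCoeff_mul_deriv_pow_le hσ hR m (by simpa using hz))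
      hy (summable_besselCoeff_mul_pow hσ y) hy
  convert hderiv using 1
  rw [(hbound.of_norm_bounded fun m =>
      norm_besselCoeff_mul_deriv_pow_le hσ hR m (by simpa using hy)).tsum_eq_zero_add,
    besselSeries, ← tsum_neg]
  simp only [CharP.cast_eq_zero, zero_mul, mul_zero, zero_add, Nat.add_sub_cancel]
  refine tsum_congr fun m => ?_
  rw [← neg_mul, ← besselCoeff_succ_mul]
  push_cast
  ring

lemma continuous_besselSeries (hσ : 0 ≤ σ) : Continuous (besselSeries σ) :=
  continuous_iff_continuousAt.2 fun y => (hasDerivAt_besselSeries hσ y).continuousAt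

lemma besselSeries_zero (σ : ℝ) : besselSeries σ 0 = (Real.Gamma (σ + 1))⁻¹ := by
  rw [besselSeries, tsum_eq_single 0 fun m hm => by simp [hm], pow_zero, mul_one,
    besselCoeff_zero]

lemma besselSeries_add_mul_besselSeries_add_two (hσ : 0 ≤ σ) (y : ℝ) :
    besselSeries σ y + y * besselSeries (σ + 2) y = (σ + 1) * besselSeries (σ + 1) y := by
  have hsum₁ := (summable_besselCoeff_mul_pow (σ := σ + 1) (by linarith) y).mul_left (σ + 1)
  have hsum₀ := summable_besselCoeff_mul_pow hσ y
  have hdiff : (σ + 1) * besselSeries (σ + 1) y - besselSeries σ y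
      = ∑' m : ℕ, ((σ + 1) * besselCoeff (σ + 1) m - besselCoeff σ m) * y ^ m := by
    rw [besselSeries, besselSeries, ← tsum_mul_left, ← hsum₁.tsum_sub hsum₀]
    exact tsum_congr fun m => by ring
  have hsum : Summable fun m => ((σ + 1) * besselCoeff (σ + 1) m - besselCoeff σ m) * y ^ m := by
    exact (hsum₁.sub hsum₀).congr fun m => by ring
  have hconst : (σ + 1) * besselCoeff (σ + 1) 0 - besselCoeff σ 0 = 0 := by
    rw [besselCoeff_zero, besselCoeff_zero, Real.Gamma_add_one (by positivity),
      mul_inv, ← mul_assoc, mul_inv_cancel₀ (by positivity), one_mul, sub_self]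
  have hshift : ∀ m : ℕ, ((σ + 1) * besselCoeff (σ + 1) (m + 1) - besselCoeff σ (m + 1))
      * y ^ (m + 1) = y * (besselCoeff (σ + 2) m * y ^ m) := fun m => by
    rw [besselCoeff_recurrence hσ, pow_succ]
    ring
  rw [hsum.tsum_eq_zero_add, hconst, zero_mul, zero_add, tsum_congr hshift, tsum_mul_left]
    at hdiff
  simp only [besselSeries] at hdiff ⊢
  linarith

end Series

section BesselJ

variable {σ x : ℝ}

lemma besselJ_eq_rpow_mul_besselSeries (hx : 0 < x) :
    besselJ σ x = (x / 2) ^ σ * besselSeries σ ((x / 2) ^ 2) := by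
  rw [besselJ, besselSeries, ← tsum_mul_left]
  refine tsum_congr fun m => ?_
  rw [Real.rpow_add (by positivity), Real.rpow_mul_natCast (by positivity), Real.rpow_two,
    besselCoeff]
  ring

lemma besselJ_add_besselJ_add_two (hσ : 0 ≤ σ) (hx : 0 < x) :
    x * besselJ σ x + x * besselJ (σ + 2) x = 2 * (σ + 1) * besselJ (σ + 1) x := by
  have hw : x / 2 ≠ 0 := by positivity
  rw [besselJ_eq_rpow_mul_besselSeries hx, besselJ_eq_rpow_mul_besselSeries hx,
    besselJ_eq_rpow_mul_besselSeries hx, Real.rpow_add_one hw, Real.rpow_add (by positivity),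
    Real.rpow_two]
  linear_combination (x * (x / 2) ^ σ) * besselSeries_add_mul_besselSeries_add_two hσ ((x / 2) ^ 2)

lemma hasDerivAt_besselJ (hσ : 0 ≤ σ) (hx : 0 < x) :
    HasDerivAt (besselJ σ) (σ / x * besselJ σ x - besselJ (σ + 1) x) x := by
  have hw : x / 2 ≠ 0 := by positivity
  have hhalf := (hasDerivAt_id' x).div_const 2
  have h := (hhalf.rpow_const (p := σ) (Or.inl hw)).mul
    ((hasDerivAt_besselSeries hσ _).comp x (hhalf.fun_pow 2))
  refine (h.congr_of_eventuallyEq ?_).congr_deriv ?_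
  · filter_upwards [Ioi_mem_nhds hx] with t ht using besselJ_eq_rpow_mul_besselSeries ht
  · rw [besselJ_eq_rpow_mul_besselSeries hx, besselJ_eq_rpow_mul_besselSeries hx,
      Real.rpow_sub_one hw, Real.rpow_add_one hw, Function.comp_apply]
    field_simp
    ring

lemma hasDerivAt_besselJ_add_one (hσ : 0 ≤ σ) (hx : 0 < x) :
    HasDerivAt (besselJ (σ + 1)) (besselJ σ x - (σ + 1) / x * besselJ (σ + 1) x) x := by
  refine (hasDerivAt_besselJ (by linarith) hx).congr_deriv ?_
  rw [add_assoc, one_add_one_eq_two]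
  field_simp
  linear_combination -besselJ_add_besselJ_add_two hσ hx

lemma tendsto_besselJ_nhdsGT_zero (hσ : 0 ≤ σ) :
    Tendsto (besselJ σ) (𝓝[>] 0) (𝓝 ((0 : ℝ) ^ σ / Real.Gamma (σ + 1))) := by
  have hcont : ContinuousAt (fun t : ℝ => (t / 2) ^ σ * besselSeries σ ((t / 2) ^ 2)) 0 :=
    ((Real.continuousAt_rpow_const _ _ (Or.inr hσ)).comp (continuousAt_id.div_const 2)).mul
      ((continuous_besselSeries hσ).continuousAt.comp ((continuousAt_id.div_const 2).pow 2))
  convert (hcont.tendsto.mono_left nhdsWithin_le_nhds).congr' ?_ using 2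
  · simp [besselSeries_zero, div_eq_mul_inv]
  · filter_upwards [self_mem_nhdsWithin] with t ht using (besselJ_eq_rpow_mul_besselSeries ht).symm

lemma tendsto_mul_besselJ_div_besselJ_add_one (hσ : 0 ≤ σ) :
    Tendsto (fun t => t * besselJ σ t / besselJ (σ + 1) t) (𝓝[>] 0) (𝓝 (2 * (σ + 1))) := by
  have hcont : ContinuousAt
      (fun t : ℝ => 2 * besselSeries σ ((t / 2) ^ 2) / besselSeries (σ + 1) ((t / 2) ^ 2)) 0 := by
    refine (continuousAt_const.mul ?_).div ?_ ?_
    · exact (continuous_besselSeries hσ).continuousAt.comp ((continuousAt_id.div_const 2).pow 2)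
    · exact (continuous_besselSeries (by linarith)).continuousAt.comp
        ((continuousAt_id.div_const 2).pow 2)
    · simp [besselSeries_zero, Real.Gamma_pos_of_pos (by linarith : (0 : ℝ) < σ + 1 + 1) |>.ne']
  convert (hcont.tendsto.mono_left nhdsWithin_le_nhds).congr' ?_ using 2
  · simp only [besselSeries_zero, zero_div, ne_eq, OfNat.ofNat_ne_zero, not_false_eq_true,
      zero_pow, div_inv_eq_mul, Real.Gamma_add_one (by linarith : σ + 1 ≠ 0)]
    field_simp
  · filter_upwards [self_mem_nhdsWithin] with t (ht : 0 < t)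
    have hw : t / 2 ≠ 0 := by positivity
    rw [besselJ_eq_rpow_mul_besselSeries ht, besselJ_eq_rpow_mul_besselSeries ht,
      Real.rpow_add_one hw, show t * ((t / 2) ^ σ * besselSeries σ ((t / 2) ^ 2))
        = ((t / 2) ^ σ * (t / 2)) * (2 * besselSeries σ ((t / 2) ^ 2)) by ring,
      mul_div_mul_left _ _ (by positivity)]

end BesselJ

section Positivity

variable {σ x : ℝ}

lemma besselJ_ne_zero_of_lt_besselJZero (hx : 0 < x) (hxj : x < besselJZero σ) :
    besselJ σ x ≠ 0 :=
  fun h => (csInf_le (⟨0, fun _ ht => ht.1.le⟩ : BddBelow {t | 0 < t ∧ besselJ σ t = 0})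
    ⟨hx, h⟩).not_gt hxj

lemma besselJ_pos_of_lt_besselJZero (hσ : 0 ≤ σ) (hx : 0 < x) (hxj : x < besselJZero σ) :
    0 < besselJ σ x := by
  by_contra hneg
  set g : ℝ → ℝ := fun t => besselSeries σ ((t / 2) ^ 2)
  have hg : ContinuousOn g (Icc 0 x) :=
    ((continuous_besselSeries hσ).comp ((continuous_id.div_const 2).pow 2)).continuousOn
  have hg0 : 0 < g 0 := by
    simpa [g, besselSeries_zero] using Real.Gamma_pos_of_pos (by linarith : 0 < σ + 1)
  have hgx : g x ≤ 0 := by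
    rw [not_lt, besselJ_eq_rpow_mul_besselSeries hx] at hneg
    exact nonpos_of_mul_nonpos_right hneg (by positivity)
  obtain ⟨c, hc, hgc⟩ := intermediate_value_Icc' hx.le hg ⟨hgx, hg0.le⟩
  have hc0 : 0 < c := hc.1.lt_of_ne (by rintro rfl; exact hg0.ne' hgc)
  refine besselJ_ne_zero_of_lt_besselJZero hc0 (hc.2.trans_lt hxj) ?_
  rw [besselJ_eq_rpow_mul_besselSeries hc0]
  exact mul_eq_zero_of_right _ hgc

lemma besselJ_add_one_pos_of_lt_besselJZero (hσ : 0 ≤ σ) (hx : 0 < x)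
    (hxj : x < besselJZero σ) : 0 < besselJ (σ + 1) x := by
  have hderiv : ∀ t ∈ Ioo 0 (besselJZero σ), HasDerivAt (fun t => t ^ (σ + 1) * besselJ (σ + 1) t)
      (t ^ (σ + 1) * besselJ σ t) t := fun t ⟨ht, _⟩ => by
    refine ((Real.hasDerivAt_rpow_const (Or.inl ht.ne')).mul
      (hasDerivAt_besselJ_add_one hσ ht)).congr_deriv ?_
    rw [add_sub_cancel_right, Real.rpow_add_one ht.ne']
    field_simp
    ring
  have hlim : Tendsto (fun t => t ^ (σ + 1) * besselJ (σ + 1) t) (𝓝[>] 0) (𝓝 0) := by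
    convert ((Real.continuousAt_rpow_const 0 (σ + 1) (Or.inr (by linarith))).tendsto.mono_left
      nhdsWithin_le_nhds).mul (tendsto_besselJ_nhdsGT_zero (σ := σ + 1) (by linarith)) using 2
    simp [Real.zero_rpow (by positivity : σ + 1 ≠ 0)]
  have hpos := pos_of_hasDerivAt_pos_of_tendsto_nhdsGT hderiv
    (fun t ht => mul_pos (Real.rpow_pos_of_pos ht.1 _)
      (besselJ_pos_of_lt_besselJZero hσ ht.1 ht.2)) hlim ⟨hx, hxj⟩
  exact pos_of_mul_pos_right hpos (Real.rpow_nonneg hx.le _)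

end Positivity

def besselUpsilon (σ x : ℝ) : ℝ :=
  x * (besselJ (σ + 1) x / besselJ σ x + besselJ σ x / besselJ (σ + 1) x)

def besselUpsilonNumerator (σ x : ℝ) : ℝ :=
  2 * (σ + 1) * (besselJ σ x ^ 3 * besselJ (σ + 1) x)
    - 2 * σ * (besselJ σ x * besselJ (σ + 1) x ^ 3)
    - x * besselJ σ x ^ 4 + x * besselJ (σ + 1) x ^ 4

section Upsilon

variable {σ x : ℝ}

lemma mul_besselJ_mul_besselJ_add_one_lt (hσ : 0 ≤ σ) (hx : 0 < x) (hxj : x < besselJZero σ) :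
    2 * (σ + 1) * (besselJ σ x * besselJ (σ + 1) x)
      < x * (besselJ σ x ^ 2 + besselJ (σ + 1) x ^ 2) := by
  set f : ℝ → ℝ := fun t => t * (t * (besselJ σ t ^ 2 + besselJ (σ + 1) t ^ 2)
    - 2 * (σ + 1) * (besselJ σ t * besselJ (σ + 1) t))
  have hderiv : ∀ t ∈ Ioo 0 (besselJZero σ),
      HasDerivAt f (2 * t * besselJ (σ + 1) t ^ 2) t := fun t ⟨ht, _⟩ => by
    have hP := hasDerivAt_besselJ hσ ht
    have hQ := hasDerivAt_besselJ_add_one hσ ht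
    refine ((hasDerivAt_id' t).fun_mul (((hasDerivAt_id' t).fun_mul ((hP.fun_pow 2).fun_add
      (hQ.fun_pow 2))).fun_sub ((hP.fun_mul hQ).const_mul _))).congr_deriv ?_
    field_simp
    ring
  have hlim : Tendsto f (𝓝[>] 0) (𝓝 0) := by
    have ht : Tendsto (fun t : ℝ => t) (𝓝[>] 0) (𝓝 0) := nhdsWithin_le_nhds
    have hP := tendsto_besselJ_nhdsGT_zero hσ
    have hQ := tendsto_besselJ_nhdsGT_zero (σ := σ + 1) (by linarith)
    convert ht.mul ((ht.mul ((hP.pow 2).add (hQ.pow 2))).sub ((hP.mul hQ).const_mul _)) using 2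
    simp
  have hpos := pos_of_hasDerivAt_pos_of_tendsto_nhdsGT hderiv
    (fun t ⟨ht, htj⟩ => by
      have hQ := besselJ_add_one_pos_of_lt_besselJZero hσ ht htj
      positivity) hlim ⟨hx, hxj⟩
  linarith [pos_of_mul_pos_right hpos hx.le]

lemma hasDerivAt_mul_besselUpsilonNumerator_div_sq (hσ : 0 ≤ σ) (hx : 0 < x)
    (hQ : besselJ (σ + 1) x ≠ 0) :
    HasDerivAt (fun t => t * besselUpsilonNumerator σ t / besselJ (σ + 1) t ^ 2)
      (2 * besselJ σ x * (x * (besselJ σ x ^ 2 + besselJ (σ + 1) x ^ 2)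
        - 2 * (σ + 1) * (besselJ σ x * besselJ (σ + 1) x))
        * (x * (besselJ σ x ^ 2 + besselJ (σ + 1) x ^ 2)
        - (2 * σ + 1) * (besselJ σ x * besselJ (σ + 1) x)) / besselJ (σ + 1) x ^ 3) x := by
  have hP' := hasDerivAt_besselJ hσ hx
  have hQ' := hasDerivAt_besselJ_add_one hσ hx
  have hN : HasDerivAt (besselUpsilonNumerator σ) _ x :=
    (((((hP'.fun_pow 3).fun_mul hQ').const_mul (2 * (σ + 1))).fun_sub
      ((hP'.fun_mul (hQ'.fun_pow 3)).const_mul (2 * σ))).fun_sub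
      ((hasDerivAt_id' x).fun_mul (hP'.fun_pow 4))).fun_add
      ((hasDerivAt_id' x).fun_mul (hQ'.fun_pow 4))
  refine (((hasDerivAt_id' x).fun_mul hN).fun_div (hQ'.fun_pow 2)
    (pow_ne_zero 2 hQ)).congr_deriv ?_
  rw [besselUpsilonNumerator]
  field_simp
  ring

lemma tendsto_mul_besselUpsilonNumerator_div_sq_nhdsGT_zero (hσ : 0 ≤ σ) :
    Tendsto (fun t => t * besselUpsilonNumerator σ t / besselJ (σ + 1) t ^ 2) (𝓝[>] 0) (𝓝 0) := by
  have ht : Tendsto (fun t : ℝ => t) (𝓝[>] 0) (𝓝 0) := nhdsWithin_le_nhds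
  have hP := tendsto_besselJ_nhdsGT_zero hσ
  have hQ := tendsto_besselJ_nhdsGT_zero (σ := σ + 1) (by linarith)
  rw [Real.zero_rpow (by positivity), zero_div] at hQ
  have hR := tendsto_mul_besselJ_div_besselJ_add_one hσ
  -- in terms of `R = t J_σ / J_{σ+1}`, whose limit `2(σ+1)` makes the leading terms cancel
  convert (((((hR.const_mul (2 * (σ + 1))).mul (hP.pow 2)).sub
    (((ht.mul hP).mul hQ).const_mul (2 * σ))).sub ((hR.pow 2).mul (hP.pow 2))).add
    ((ht.pow 2).mul (hQ.pow 2))) using 2 with t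
  · rw [besselUpsilonNumerator]
    rcases eq_or_ne (besselJ (σ + 1) t) 0 with hQ0 | hQ0
    · simp [hQ0]
    · field_simp
  · ring

lemma besselUpsilonNumerator_pos (hσ : 0 ≤ σ) (hx : 0 < x) (hxj : x < besselJZero σ) :
    0 < besselUpsilonNumerator σ x := by
  have hpos := pos_of_hasDerivAt_pos_of_tendsto_nhdsGT
    (fun t ⟨ht, htj⟩ => hasDerivAt_mul_besselUpsilonNumerator_div_sq hσ ht
      (besselJ_add_one_pos_of_lt_besselJZero hσ ht htj).ne')
    (fun t ⟨ht, htj⟩ => by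
      have hP := besselJ_pos_of_lt_besselJZero hσ ht htj
      have hQ := besselJ_add_one_pos_of_lt_besselJZero hσ ht htj
      have hZ := mul_besselJ_mul_besselJ_add_one_lt hσ ht htj
      refine div_pos (mul_pos (mul_pos (by positivity) (by linarith)) ?_) (by positivity)
      nlinarith [mul_pos hP hQ])
    (tendsto_mul_besselUpsilonNumerator_div_sq_nhdsGT_zero hσ) ⟨hx, hxj⟩
  rw [div_pos_iff_of_pos_right (pow_pos (besselJ_add_one_pos_of_lt_besselJZero hσ hx hxj) 2)]
    at hpos
  exact pos_of_mul_pos_right hpos hx.le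

lemma hasDerivAt_besselUpsilon (hσ : 0 ≤ σ) (hx : 0 < x) (hP : besselJ σ x ≠ 0)
    (hQ : besselJ (σ + 1) x ≠ 0) :
    HasDerivAt (besselUpsilon σ)
      (besselUpsilonNumerator σ x / (besselJ σ x * besselJ (σ + 1) x) ^ 2) x := by
  have hP' := hasDerivAt_besselJ hσ hx
  have hQ' := hasDerivAt_besselJ_add_one hσ hx
  refine ((hasDerivAt_id' x).fun_mul ((hQ'.fun_div hP' hP).fun_add
    (hP'.fun_div hQ' hQ))).congr_deriv ?_
  rw [besselUpsilonNumerator]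
  field_simp
  ring

lemma strictMonoOn_besselUpsilon (hσ : 0 ≤ σ) :
    StrictMonoOn (besselUpsilon σ) (Ioo 0 (besselJZero σ)) := by
  refine strictMonoOn_Ioo_of_hasDerivAt_pos (fun x ⟨hx, hxj⟩ => hasDerivAt_besselUpsilon hσ hx
    (besselJ_pos_of_lt_besselJZero hσ hx hxj).ne'
    (besselJ_add_one_pos_of_lt_besselJZero hσ hx hxj).ne') fun x ⟨hx, hxj⟩ => ?_
  have hP := besselJ_pos_of_lt_besselJZero hσ hx hxj
  have hQ := besselJ_add_one_pos_of_lt_besselJZero hσ hx hxj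
  exact div_pos (besselUpsilonNumerator_pos hσ hx hxj) (by positivity)

lemma besselUpsilon_eq (hσ : 0 ≤ σ) (hx : 0 < x) (hP : besselJ σ x ≠ 0)
    (hQ : besselJ (σ + 1) x ≠ 0) :
    besselUpsilon σ x = 2 * (σ + 1) +
      x * (besselJ (σ + 1) x / besselJ σ x - besselJ (σ + 2) x / besselJ (σ + 1) x) := by
  rw [besselUpsilon]
  field_simp
  linear_combination besselJ σ x * besselJ_add_besselJ_add_two hσ hx

end Upsilon

/-- `Υ_σ(x) = x (J_{σ+1}(x)/J_σ(x) + J_σ(x)/J_{σ+1}(x))` is strictly increasing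
on `(0, j_{σ,1})` and equals `2(σ+1) + x (J_{σ+1}(x)/J_σ(x) - J_{σ+2}(x)/J_{σ+1}(x))` there. -/
theorem stmt19 (σ : ℝ) (hσ : 1 / 2 ≤ σ) (Υ : ℝ → ℝ)
    (hΥ : ∀ x, Υ x = x * (besselJ (σ + 1) x / besselJ σ x + besselJ σ x / besselJ (σ + 1) x)) :
    StrictMonoOn Υ (Ioo 0 (besselJZero σ)) ∧
    ∀ x ∈ Ioo 0 (besselJZero σ),
      Υ x = 2 * (σ + 1) +
        x * (besselJ (σ + 1) x / besselJ σ x - besselJ (σ + 2) x / besselJ (σ + 1) x) := by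
  have hσ₀ : 0 ≤ σ := by linarith
  obtain rfl : Υ = besselUpsilon σ := funext hΥ
  exact ⟨strictMonoOn_besselUpsilon hσ₀, fun x ⟨hx, hxj⟩ => besselUpsilon_eq hσ₀ hx
    (besselJ_pos_of_lt_besselJZero hσ₀ hx hxj).ne'
    (besselJ_add_one_pos_of_lt_besselJZero hσ₀ hx hxj).ne'⟩
end
end
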